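/- Let P, Q, R be probability distributions on a finite set X and α > 0. Then KL(P‖R) ≤ (1 + 1/α)·KL(P‖Q) + D_{1+α}(Q‖R), where D_{1+α}(Q‖R) = (1/α)·log₂(Σ_x Q(x)^{1+α}/R(x)^α) is the Rényi divergence of order 1+α. -/

import Mathlib

/-!
Write `a = Q ^ (1 + α) / R ^ α` for the tilt of `Q` towards `R`, with logarithms in base 2.
Pointwise, `α · P log (P / R) = (1 + α) · P log (P / Q) + P log (a / P)`, so summing gives
`α · KL(P‖R) = (1 + α) · KL(P‖Q) + ∑ P log (a / P)`, and Gibbs' inequality bounds the last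
sum by `log ∑ a = α · D_{1+α}(Q‖R)`. Gibbs' inequality itself is the tangent-line bound
`log y ≤ log c + y / c - 1` at `c = ∑ a`, weighted by `P` and summed.
-/

open scoped BigOperators

/-- A probability mass function on a finite set. -/
def IsPMF {X : Type*} [Fintype X] (P : X → ℝ) : Prop :=
  (∀ x, 0 ≤ P x) ∧ ∑ x, P x = 1

/-- KL divergence (in bits) between distributions on a finite set. -/
noncomputable def KLdiv {X : Type*} [Fintype X] (P Q : X → ℝ) : ℝ :=
  ∑ x, P x * Real.logb 2 (P x / Q x)

/-- Rényi divergence (in bits) of order `1 + α` between distributions. -/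
noncomputable def renyiDiv {X : Type*} [Fintype X] (α : ℝ) (Q R : X → ℝ) : ℝ :=
  (1 / α) * Real.logb 2 (∑ x, Q x ^ (1 + α) / R x ^ α)

namespace Real

lemma log_le_log_add_div_sub_one {c y : ℝ} (hc : 0 < c) (hy : 0 < y) :
    log y ≤ log c + y / c - 1 := by
  have h := log_le_sub_one_of_pos (div_pos hy hc)
  rw [log_div hy.ne' hc.ne'] at h
  linarith

lemma mul_log_div_le {p a c : ℝ} (hp : 0 ≤ p) (ha : 0 < a) (hc : 0 < c) :
    p * log (a / p) ≤ p * log c + a / c - p := by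
  rcases hp.eq_or_lt with rfl | hp
  · simpa using (div_pos ha hc).le
  · have h := mul_le_mul_of_nonneg_left (log_le_log_add_div_sub_one hc (div_pos ha hp)) hp.le
    have hpa : p * (a / p / c) = a / c := by field_simp
    linarith

theorem sum_mul_log_div_le_log_sum {ι : Type*} {s : Finset ι} {p a : ι → ℝ}
    (hp : ∀ i ∈ s, 0 ≤ p i) (hp1 : ∑ i ∈ s, p i = 1) (ha : ∀ i ∈ s, 0 < a i) :
    ∑ i ∈ s, p i * log (a i / p i) ≤ log (∑ i ∈ s, a i) := by
  have hs : s.Nonempty := Finset.nonempty_of_sum_ne_zero (by rw [hp1]; exact one_ne_zero)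
  set S := ∑ i ∈ s, a i
  have hS : 0 < S := Finset.sum_pos ha hs
  calc ∑ i ∈ s, p i * log (a i / p i)
      ≤ ∑ i ∈ s, (p i * log S + a i / S - p i) :=
        Finset.sum_le_sum fun i hi => mul_log_div_le (hp i hi) (ha i hi) hS
    _ = log S := by
        rw [Finset.sum_sub_distrib, Finset.sum_add_distrib, ← Finset.sum_mul, ← Finset.sum_div,
          hp1, div_self hS.ne']
        ring

theorem sum_mul_logb_div_le_logb_sum {ι : Type*} {s : Finset ι} {b : ℝ} (hb : 1 < b)
    {p a : ι → ℝ}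
    (hp : ∀ i ∈ s, 0 ≤ p i) (hp1 : ∑ i ∈ s, p i = 1) (ha : ∀ i ∈ s, 0 < a i) :
    ∑ i ∈ s, p i * logb b (a i / p i) ≤ logb b (∑ i ∈ s, a i) := by
  simp only [logb, ← mul_div_assoc, ← Finset.sum_div]
  exact div_le_div_of_nonneg_right (sum_mul_log_div_le_log_sum hp hp1 ha) (log_pos hb).le

lemma mul_mul_logb_div_eq_add_mul_logb_tilt {b α p q r : ℝ} (hq : 0 < q) (hr : 0 < r) :
    α * (p * logb b (p / r)) =
      (1 + α) * (p * logb b (p / q)) + p * logb b (q ^ (1 + α) / r ^ α / p) := by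
  rcases eq_or_ne p 0 with rfl | hp
  · simp
  · rw [logb_div hp hr.ne', logb_div hp hq.ne',
      logb_div (div_pos (rpow_pos_of_pos hq _) (rpow_pos_of_pos hr _)).ne' hp,
      logb_div (rpow_pos_of_pos hq _).ne' (rpow_pos_of_pos hr _).ne',
      logb_rpow_eq_mul_logb_of_pos hq, logb_rpow_eq_mul_logb_of_pos hr]
    ring

end Real

theorem kl_triangle_general {X : Type*} [Fintype X] (α : ℝ) (hα : 0 < α)
    (P Q R : X → ℝ) (hP : IsPMF P)
    (hQpos : ∀ x, 0 < Q x) (hRpos : ∀ x, 0 < R x) :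
    KLdiv P R ≤ (1 + 1 / α) * KLdiv P Q + renyiDiv α Q R := by
  have hdecomp : α * KLdiv P R = (1 + α) * KLdiv P Q +
      ∑ x, P x * Real.logb 2 (Q x ^ (1 + α) / R x ^ α / P x) := by
    simp only [KLdiv, Finset.mul_sum, ← Finset.sum_add_distrib]
    exact Finset.sum_congr rfl fun x _ =>
      Real.mul_mul_logb_div_eq_add_mul_logb_tilt (hQpos x) (hRpos x)
  have hgibbs := Real.sum_mul_logb_div_le_logb_sum one_lt_two (fun x _ => hP.1 x) hP.2
    (fun x _ => div_pos (Real.rpow_pos_of_pos (hQpos x) (1 + α))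
      (Real.rpow_pos_of_pos (hRpos x) α))
  have hrhs : (1 + 1 / α) * KLdiv P Q + renyiDiv α Q R =
      ((1 + α) * KLdiv P Q + Real.logb 2 (∑ x, Q x ^ (1 + α) / R x ^ α)) / α := by
    rw [renyiDiv]
    field_simp
    ring
  rw [hrhs, le_div_iff₀ hα]
  linarith

/-- Weak triangle inequality for the KL divergence via Rényi divergences. -/
theorem kl_triangle {X : Type*} [Fintype X] (α : ℝ) (hα : 0 < α)
    (P Q R : X → ℝ) (hP : IsPMF P) (hQ : IsPMF Q) (hR : IsPMF R)
    (hQpos : ∀ x, 0 < Q x) (hRpos : ∀ x, 0 < R x) :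
    KLdiv P R ≤ (1 + 1 / α) * KLdiv P Q + renyiDiv α Q R :=
  kl_triangle_general α hα P Q R hP hQpos hRpos
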